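/- arXiv:math/0205150 — 3 statements merged into one kernel-verified Lean document; each statement's English description precedes it below -/
import Mathlib

section
/- Let G be a finite group, k a field of characteristic zero, and D(G) = k(G) ⋊ kG the Drinfeld double algebra. Fix for each conjugacy class C ⊆ G a basepoint s₀ ∈ C and for each s ∈ C an element g_s ∈ G with g_s s₀ g_s⁻¹ = s. For a conjugacy class C with basepoint s₀ and a centrally primitive idempotent f of the group algebra k[C_G(s₀)] (written f = Σ_{w ∈ C_G(s₀)} f(w) w), define e_{C,f} ∈ D(G) by e_{C,f}(s,u) = f(g_s⁻¹ u g_s) if s ∈ C and u ∈ C_G(s), and e_{C,f}(s,u) = 0 otherwise. Then e_{C,f} is a centrally primitive idempotent of D(G), it does not depend on the choice of the elements g_s, and the map (C, f) ↦ e_{C,f} is a bijection from the set of pairs (conjugacy class C of G, centrally primitive idempotent f of k[C_G(s₀)]) onto the set of centrally primitive idempotents of D(G). -/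
/-!
A central element `x` of `D(G)` is the same thing as a function supported on the commuting
pairs `(s, u)` and invariant under simultaneous conjugation. If moreover `x` is supported on
the class `C` of `s₀`, it is determined by its restriction `u ↦ x (s₀, u)`, a central element
of `k[C_G(s₀)]`, and `f ↦ e_{C,f}` inverts this restriction. Restriction is multiplicative on
central elements, so the central elements of `D(G)` supported on `C` form a ring isomorphic to
the centre of `k[C_G(s₀)]`, and centrally primitive idempotents correspond. A centrally
primitive idempotent `e` of `D(G)` lives on a single class `C`, because `e_{C,1} e` is either
`0` or `e`. The choice of the `g_s` is immaterial since `e_{C,f}` is recovered from its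
restriction at `s₀` whatever the choice.
-/

attribute [local instance] Classical.propDecidable

/-- The product of the Drinfeld double algebra `D(G) = k(G) ⋊ kG`, realised on the
space of functions `G × G → k`.  On the basis `{δ_s ⊗ u}` of indicator functions it is
`(δ_s ⊗ u)(δ_t ⊗ v) = δ_{s, utu⁻¹} (δ_s ⊗ uv)`. -/
def drinfeldDoubleMul {k : Type*} [Field k] {G : Type*} [Group G] [Fintype G]
    (f g : G × G → k) : G × G → k :=
  fun p => ∑ u : G, f (p.1, u) * g (u⁻¹ * p.1 * u, u⁻¹ * p.2)

/-- An element `e` is a *centrally primitive idempotent* for a multiplication `mul` if it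
is a nonzero central idempotent that cannot be written as `e = e' + e''` with `e', e''`
nonzero central idempotents satisfying `e' e'' = 0`. -/
def IsCentrallyPrimitiveFor {α : Type*} [Zero α] [Add α] (mul : α → α → α) (e : α) : Prop :=
  e ≠ 0 ∧ (∀ x, mul e x = mul x e) ∧ mul e e = e ∧
    ¬ ∃ e' e'' : α, e' ≠ 0 ∧ e'' ≠ 0 ∧
        (∀ x, mul e' x = mul x e') ∧ (∀ x, mul e'' x = mul x e'') ∧
        mul e' e' = e' ∧ mul e'' e'' = e'' ∧ mul e' e'' = 0 ∧ e = e' + e''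

/-- The coefficient function of an element of the group algebra `k[H]` of a subgroup
`H ≤ G`, extended by zero to all of `G`.  For `f = Σ_{w ∈ H} f(w) w` this returns `f(w)`
for `w ∈ H` and `0` otherwise. -/
noncomputable def subgroupCoeff {k : Type*} [Semiring k] {G : Type*} [Group G]
    (H : Subgroup G) (f : MonoidAlgebra k ↥H) (w : G) : k :=
  if h : w ∈ H then f.coeff ⟨w, h⟩ else 0

/-- The element `e_{C,f}` of `D(G)`: given a conjugacy class `C = mk⁻¹(c)` with
basepoint `s₀ = b c`, elements `g_s` with `g_s s₀ g_s⁻¹ = s`, and an element `f` of the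
group algebra of the centralizer `C_G(s₀)`, set `e_{C,f}(s,u) = f(g_s⁻¹ u g_s)` if
`s ∈ C` and `u ∈ C_G(s)`, and `e_{C,f}(s,u) = 0` otherwise. -/
noncomputable def doubleClassIdempotent {k : Type*} [Semiring k] {G : Type*} [Group G]
    (b : ConjClasses G → G) (g : G → G) (c : ConjClasses G)
    (f : MonoidAlgebra k ↥(Subgroup.centralizer ({b c} : Set G))) : G × G → k :=
  fun p =>
    if ConjClasses.mk p.1 = c then
      subgroupCoeff (Subgroup.centralizer ({b c} : Set G)) f ((g p.1)⁻¹ * p.2 * g p.1)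
    else 0

open Finset Subgroup

local infixl:70 " ⋆ " => drinfeldDoubleMul

section Conjugation
variable {G : Type*} [Group G]

theorem mem_centralizer_singleton_iff_conj {s u : G} :
    u ∈ centralizer ({s} : Set G) ↔ u⁻¹ * s * u = s := by
  rw [mem_centralizer_singleton_iff, mul_assoc, inv_mul_eq_iff_eq_mul, eq_comm]

theorem conj_mem_centralizer_conj_iff {s u x : G} :
    x⁻¹ * u * x ∈ centralizer ({x⁻¹ * s * x} : Set G) ↔ u ∈ centralizer ({s} : Set G) := by
  rw [mem_centralizer_singleton_iff_conj, mem_centralizer_singleton_iff_conj,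
    show (x⁻¹ * u * x)⁻¹ * (x⁻¹ * s * x) * (x⁻¹ * u * x) = x⁻¹ * (u⁻¹ * s * u) * x by group,
    mul_left_inj, mul_right_inj]

theorem inv_mul_mul_mem_centralizer {s₀ s v x y : G} (hx : x⁻¹ * s * x = s₀)
    (hy : y⁻¹ * (v⁻¹ * s * v) * y = s₀) : x⁻¹ * v * y ∈ centralizer ({s₀} : Set G) := by
  rw [mem_centralizer_singleton_iff_conj]
  calc (x⁻¹ * v * y)⁻¹ * s₀ * (x⁻¹ * v * y) = y⁻¹ * (v⁻¹ * s * v) * y := by rw [← hx]; group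
    _ = s₀ := hy

theorem inv_mul_mul_eq_of_mul_mul_inv_eq {x a b : G} (h : x * a * x⁻¹ = b) : x⁻¹ * b * x = a := by
  rw [← h]
  group

theorem ConjClasses.mk_inv_mul_mul (s v : G) :
    ConjClasses.mk (v⁻¹ * s * v) = ConjClasses.mk s :=
  ConjClasses.mk_eq_mk_iff_isConj.2 (isConj_iff.2 ⟨v, by group⟩)

end Conjugation

namespace MonoidAlgebra

theorem forall_mul_comm_iff_coeff_conj {k Γ : Type*} [CommSemiring k] [Group Γ]
    (f : MonoidAlgebra k Γ) :
    (∀ y, f * y = y * f) ↔ ∀ a x : Γ, f.coeff (a⁻¹ * x * a) = f.coeff x := by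
  refine ⟨fun hf a x => ?_, fun hf y => ?_⟩
  · simpa [mul_assoc] using congrArg (fun y => y.coeff (x * a)) (hf (single a 1)).symm
  · induction y using induction_linear with
    | zero => rw [mul_zero, zero_mul]
    | add y z hy hz => rw [mul_add, add_mul, hy, hz]
    | single a r =>
      ext x
      rw [coeff_mul_single_apply, coeff_single_mul_apply, mul_comm, ← hf a (x * a⁻¹)]
      group

end MonoidAlgebra

section SubgroupCoeff
variable {k G : Type*} [Group G] (H : Subgroup G)

theorem subgroupCoeff_coe [Semiring k] (f : MonoidAlgebra k H) (w : H) :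
    subgroupCoeff H f w = f.coeff w :=
  dif_pos w.2

theorem subgroupCoeff_of_notMem [Semiring k] (f : MonoidAlgebra k H) {w : G} (hw : w ∉ H) :
    subgroupCoeff H f w = 0 :=
  dif_neg hw

theorem subgroupCoeff_zero [Semiring k] : subgroupCoeff H (0 : MonoidAlgebra k H) = 0 := by
  funext w
  by_cases hw : w ∈ H <;> simp [subgroupCoeff, hw]

theorem subgroupCoeff_add [Semiring k] (f f' : MonoidAlgebra k H) :
    subgroupCoeff H (f + f') = subgroupCoeff H f + subgroupCoeff H f' := by
  funext w
  by_cases hw : w ∈ H <;> simp [subgroupCoeff, hw]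

theorem subgroupCoeff_conj [CommSemiring k] {f : MonoidAlgebra k H} (hf : ∀ y, f * y = y * f)
    {h : G} (hh : h ∈ H) (w : G) : subgroupCoeff H f (h⁻¹ * w * h) = subgroupCoeff H f w := by
  by_cases hw : w ∈ H
  · let a : H := ⟨h, hh⟩
    let x : H := ⟨w, hw⟩
    calc subgroupCoeff H f (h⁻¹ * w * h) = f.coeff (a⁻¹ * x * a) :=
          subgroupCoeff_coe H f (a⁻¹ * x * a)
      _ = f.coeff x := (f.forall_mul_comm_iff_coeff_conj.1 hf) a x
      _ = subgroupCoeff H f w := (subgroupCoeff_coe H f x).symm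
  · have hw' : h⁻¹ * w * h ∉ H := by
      rwa [H.mul_mem_cancel_right hh, H.mul_mem_cancel_left (H.inv_mem hh)]
    rw [subgroupCoeff_of_notMem H f hw, subgroupCoeff_of_notMem H f hw']

end SubgroupCoeff

section DrinfeldDouble
variable {k G : Type*} [Field k] [Group G] [Fintype G]

theorem drinfeldDoubleMul_apply (x y : G × G → k) (s m : G) :
    (x ⋆ y) (s, m) = ∑ u, x (s, u) * y (u⁻¹ * s * u, u⁻¹ * m) :=
  rfl

theorem drinfeldDoubleMul_add_right (x y z : G × G → k) : x ⋆ (y + z) = x ⋆ y + x ⋆ z := by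
  funext p
  simp [drinfeldDoubleMul, mul_add, sum_add_distrib]

theorem drinfeldDoubleMul_sub_left (x y z : G × G → k) : (x - y) ⋆ z = x ⋆ z - y ⋆ z := by
  funext p
  simp [drinfeldDoubleMul, sub_mul, sum_sub_distrib]

theorem drinfeldDoubleMul_sub_right (x y z : G × G → k) : x ⋆ (y - z) = x ⋆ y - x ⋆ z := by
  funext p
  simp [drinfeldDoubleMul, mul_sub, sum_sub_distrib]

theorem drinfeldDoubleMul_assoc (x y z : G × G → k) : x ⋆ y ⋆ z = x ⋆ (y ⋆ z) := by
  funext ⟨s, m⟩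
  simp only [drinfeldDoubleMul_apply, sum_mul, mul_sum]
  rw [sum_comm]
  refine sum_congr rfl fun v _ => Fintype.sum_equiv (Equiv.mulLeft v⁻¹) _ _ fun u => ?_
  rw [Equiv.coe_mulLeft, mul_assoc]
  congr 3
  group

theorem single_drinfeldDoubleMul_apply (x : G × G → k) (t v s m : G) :
    (Pi.single (t, v) 1 ⋆ x) (s, m) = if s = t then x (v⁻¹ * s * v, v⁻¹ * m) else 0 := by
  rw [drinfeldDoubleMul_apply, sum_eq_single v]
  · by_cases h : s = t <;> simp [h]
  · intro u _ hu
    simp [hu]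
  · simp

theorem drinfeldDoubleMul_single_apply (x : G × G → k) (t v s m : G) :
    (x ⋆ Pi.single (t, v) 1) (s, m) =
      if (m * v⁻¹)⁻¹ * s * (m * v⁻¹) = t then x (s, m * v⁻¹) else 0 := by
  rw [drinfeldDoubleMul_apply, sum_eq_single (m * v⁻¹)]
  · simp only [Pi.single_apply, Prod.mk.injEq, show (m * v⁻¹)⁻¹ * m = v by group, and_true]
    split_ifs <;> simp
  · intro u _ hu
    have : u⁻¹ * m ≠ v := fun h => hu (by rw [← h]; group)
    simp [this]
  · simp

theorem apply_eq_zero_of_central {x : G × G → k} (hx : ∀ z, x ⋆ z = z ⋆ x) {s u : G}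
    (hu : u ∉ centralizer ({s} : Set G)) : x (s, u) = 0 := by
  rw [mem_centralizer_singleton_iff_conj] at hu
  have h := congrFun (hx (Pi.single (u⁻¹ * s * u, 1) 1)) (s, u)
  rwa [drinfeldDoubleMul_single_apply, single_drinfeldDoubleMul_apply, inv_one, mul_one,
    if_pos rfl, if_neg (Ne.symm hu)] at h

theorem apply_conj_of_central {x : G × G → k} (hx : ∀ z, x ⋆ z = z ⋆ x) (s u v : G) :
    x (v⁻¹ * s * v, v⁻¹ * u * v) = x (s, u) := by
  by_cases hu : u ∈ centralizer ({s} : Set G)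
  · have h := congrFun (hx (Pi.single (s, v) 1)) (s, u * v)
    rw [drinfeldDoubleMul_single_apply, single_drinfeldDoubleMul_apply, mul_inv_cancel_right,
      if_pos (mem_centralizer_singleton_iff_conj.1 hu), if_pos rfl, ← mul_assoc] at h
    exact h.symm
  · rw [apply_eq_zero_of_central hx hu,
      apply_eq_zero_of_central hx (conj_mem_centralizer_conj_iff.not.2 hu)]

theorem drinfeldDoubleMul_comm_of_conj_invariant {x : G × G → k}
    (hsupp : ∀ s u, u ∉ centralizer ({s} : Set G) → x (s, u) = 0)
    (hconj : ∀ s u v, x (v⁻¹ * s * v, v⁻¹ * u * v) = x (s, u)) (z : G × G → k) :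
    x ⋆ z = z ⋆ x := by
  funext ⟨s, m⟩
  calc (x ⋆ z) (s, m) = ∑ u, x (s, u) * z (s, u⁻¹ * m) := by
        refine sum_congr rfl fun u _ => ?_
        by_cases hu : u ∈ centralizer ({s} : Set G)
        · rw [mem_centralizer_singleton_iff_conj.1 hu]
        · rw [hsupp s u hu, zero_mul, zero_mul]
    _ = ∑ u, z (s, u) * x (s, m * u⁻¹) :=
        Fintype.sum_equiv ((Equiv.inv G).trans (Equiv.mulRight m)) _ _ fun u => by
          rw [Equiv.trans_apply, Equiv.inv_apply, Equiv.coe_mulRight, mul_comm,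
            show m * (u⁻¹ * m)⁻¹ = u by group]
    _ = (z ⋆ x) (s, m) := by
        refine sum_congr rfl fun u _ => ?_
        rw [← hconj (u⁻¹ * s * u) (u⁻¹ * m) u⁻¹]
        congr 3 <;> group

theorem support_drinfeldDoubleMul_subset {y : G × G → k} {c : ConjClasses G}
    (hy : Function.support y ⊆ {p | ConjClasses.mk p.1 = c}) (x : G × G → k) :
    Function.support (x ⋆ y) ⊆ {p | ConjClasses.mk p.1 = c} :=
  Function.support_subset_iff'.2 fun _ hp => sum_eq_zero fun _ _ => by
    rw [Function.support_subset_iff'.1 hy _ (by simpa [ConjClasses.mk_inv_mul_mul] using hp),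
      mul_zero]

theorem drinfeldDoubleMul_comm_of_comm {x y : G × G → k} (hx : ∀ z, x ⋆ z = z ⋆ x)
    (hy : ∀ z, y ⋆ z = z ⋆ y) (z : G × G → k) : x ⋆ y ⋆ z = z ⋆ (x ⋆ y) := by
  rw [drinfeldDoubleMul_assoc, hy z, ← drinfeldDoubleMul_assoc, hx z, drinfeldDoubleMul_assoc]

theorem IsCentrallyPrimitiveFor.drinfeldDoubleMul_eq_zero_or_eq {e ε : G × G → k}
    (he : IsCentrallyPrimitiveFor drinfeldDoubleMul e) (hε : ∀ z, ε ⋆ z = z ⋆ ε)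
    (hεε : ε ⋆ ε = ε) : ε ⋆ e = 0 ∨ ε ⋆ e = e := by
  obtain ⟨-, he, hee, hprim⟩ := he
  by_contra! h
  have hεe := drinfeldDoubleMul_comm_of_comm hε he
  have hεe_e : ε ⋆ e ⋆ e = ε ⋆ e := by rw [drinfeldDoubleMul_assoc, hee]
  have hεe_εe : ε ⋆ e ⋆ (ε ⋆ e) = ε ⋆ e := by
    rw [drinfeldDoubleMul_assoc, ← hεe e, hεe_e, ← drinfeldDoubleMul_assoc, hεε]
  refine hprim ⟨ε ⋆ e, e - ε ⋆ e, h.1, sub_ne_zero.2 h.2.symm, hεe, fun z => ?_, hεe_εe, ?_, ?_,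
    (add_sub_cancel _ _).symm⟩
  · rw [drinfeldDoubleMul_sub_left, drinfeldDoubleMul_sub_right, he z, hεe z]
  · rw [drinfeldDoubleMul_sub_left, drinfeldDoubleMul_sub_right, drinfeldDoubleMul_sub_right, hee,
      hεe_e, ← hεe e, hεe_e, hεe_εe, sub_self, sub_zero]
  · rw [drinfeldDoubleMul_sub_right, hεe_e, hεe_εe, sub_self]

end DrinfeldDouble

section Restriction
variable {k G : Type*} [Group G] {s₀ : G}

noncomputable def restrictToCentralizer [Semiring k] [Finite G] (s₀ : G) (x : G × G → k) :
    MonoidAlgebra k (centralizer ({s₀} : Set G)) :=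
  .ofCoeff (Finsupp.equivFunOnFinite.symm fun w => x (s₀, w))

section Semiring
variable [Semiring k] [Finite G]

theorem restrictToCentralizer_coeff (x : G × G → k) (w : centralizer ({s₀} : Set G)) :
    (restrictToCentralizer s₀ x).coeff w = x (s₀, w) :=
  rfl

theorem restrictToCentralizer_zero : restrictToCentralizer s₀ (0 : G × G → k) = 0 := by
  ext w
  rfl

theorem restrictToCentralizer_add (x y : G × G → k) :
    restrictToCentralizer s₀ (x + y) =
      restrictToCentralizer s₀ x + restrictToCentralizer s₀ y := by
  ext w
  rfl

end Semiring

variable [Field k] [Fintype G]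

theorem subgroupCoeff_restrictToCentralizer {x : G × G → k} (hx : ∀ z, x ⋆ z = z ⋆ x) (w : G) :
    subgroupCoeff _ (restrictToCentralizer s₀ x) w = x (s₀, w) := by
  by_cases hw : w ∈ centralizer ({s₀} : Set G)
  · exact subgroupCoeff_coe _ _ ⟨w, hw⟩
  · rw [subgroupCoeff_of_notMem _ _ hw, apply_eq_zero_of_central hx hw]

theorem restrictToCentralizer_comm {x : G × G → k} (hx : ∀ z, x ⋆ z = z ⋆ x)
    (y : MonoidAlgebra k (centralizer ({s₀} : Set G))) :
    restrictToCentralizer s₀ x * y = y * restrictToCentralizer s₀ x := by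
  refine (MonoidAlgebra.forall_mul_comm_iff_coeff_conj _).2 (fun a w => ?_) y
  simp only [restrictToCentralizer_coeff]
  rw [← apply_conj_of_central hx s₀ w a, mem_centralizer_singleton_iff_conj.1 a.2]
  rfl

theorem restrictToCentralizer_mul {x : G × G → k} (hx : ∀ z, x ⋆ z = z ⋆ x) (y : G × G → k) :
    restrictToCentralizer s₀ (x ⋆ y) =
      restrictToCentralizer s₀ x * restrictToCentralizer s₀ y := by
  ext w
  rw [MonoidAlgebra.coeff_mul_apply_left, Finsupp.sum_fintype _ _ (by simp),
    restrictToCentralizer_coeff, drinfeldDoubleMul_apply,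
    ← sum_filter_of_ne (p := (· ∈ centralizer ({s₀} : Set G))) fun u _ hu => ?_,
    sum_subtype (p := (· ∈ centralizer ({s₀} : Set G))) _ (by simp) _]
  · refine sum_congr rfl fun v _ => ?_
    rw [mem_centralizer_singleton_iff_conj.1 v.2]
    rfl
  · by_contra hv
    exact hu (by rw [apply_eq_zero_of_central hx hv, zero_mul])

end Restriction

section ClassIdempotent
variable {k G : Type*} [Group G] {b : ConjClasses G → G} {g : G → G} {c : ConjClasses G}

def IsBasepointConjugator (b : ConjClasses G → G) (g : G → G) : Prop :=
  ∀ s, g s * b (ConjClasses.mk s) * (g s)⁻¹ = s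

theorem support_doubleClassIdempotent_subset [Semiring k]
    (f : MonoidAlgebra k (centralizer ({b c} : Set G))) :
    Function.support (doubleClassIdempotent b g c f) ⊆ {p | ConjClasses.mk p.1 = c} :=
  Function.support_subset_iff'.2 fun _ hp => if_neg hp

theorem doubleClassIdempotent_zero [Semiring k] :
    doubleClassIdempotent b g c (0 : MonoidAlgebra k _) = 0 := by
  funext p
  simp [doubleClassIdempotent, subgroupCoeff_zero]

theorem doubleClassIdempotent_add [Semiring k]
    (f f' : MonoidAlgebra k (centralizer ({b c} : Set G))) :
    doubleClassIdempotent b g c (f + f') =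
      doubleClassIdempotent b g c f + doubleClassIdempotent b g c f' := by
  funext p
  by_cases hp : ConjClasses.mk p.1 = c <;> simp [doubleClassIdempotent, subgroupCoeff_add, hp]

variable [Field k] [Fintype G]

theorem doubleClassIdempotent_comm (hg : IsBasepointConjugator b g)
    {f : MonoidAlgebra k (centralizer ({b c} : Set G))} (hf : ∀ y, f * y = y * f)
    (z : G × G → k) : doubleClassIdempotent b g c f ⋆ z = z ⋆ doubleClassIdempotent b g c f := by
  have hbase s := inv_mul_mul_eq_of_mul_mul_inv_eq (hg s)
  refine drinfeldDoubleMul_comm_of_conj_invariant (fun s u hu => ?_) (fun s u v => ?_) z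
  · simp only [doubleClassIdempotent]
    split_ifs with hs
    · subst hs
      refine subgroupCoeff_of_notMem _ _ ?_
      rw [← hbase s]
      exact conj_mem_centralizer_conj_iff.not.2 hu
    · rfl
  · simp only [doubleClassIdempotent, ConjClasses.mk_inv_mul_mul]
    split_ifs with hs
    · subst hs
      have hh := inv_mul_mul_mem_centralizer (hbase s)
        ((hbase (v⁻¹ * s * v)).trans (by rw [ConjClasses.mk_inv_mul_mul]))
      rw [← subgroupCoeff_conj _ hf hh ((g s)⁻¹ * u * g s)]
      congr 1
      group
    · rfl

theorem restrictToCentralizer_doubleClassIdempotent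
    (hb : ∀ c : ConjClasses G, ConjClasses.mk (b c) = c) (hg : IsBasepointConjugator b g)
    {f : MonoidAlgebra k (centralizer ({b c} : Set G))} (hf : ∀ y, f * y = y * f) :
    restrictToCentralizer (b c) (doubleClassIdempotent b g c f) = f := by
  have hgb : g (b c) ∈ centralizer ({b c} : Set G) := by
    rw [mem_centralizer_singleton_iff_conj]
    exact inv_mul_mul_eq_of_mul_mul_inv_eq (by simpa [hb c] using hg (b c))
  ext w
  rw [restrictToCentralizer_coeff, doubleClassIdempotent, if_pos (hb c),
    subgroupCoeff_conj _ hf hgb, subgroupCoeff_coe]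

theorem doubleClassIdempotent_restrictToCentralizer_apply (hg : IsBasepointConjugator b g)
    {x : G × G → k} (hx : ∀ z, x ⋆ z = z ⋆ x) (s u : G) :
    doubleClassIdempotent b g c (restrictToCentralizer (b c) x) (s, u) =
      if ConjClasses.mk s = c then x (s, u) else 0 := by
  simp only [doubleClassIdempotent]
  split_ifs with hs
  · subst hs
    rw [subgroupCoeff_restrictToCentralizer hx, ← apply_conj_of_central hx s u (g s),
      inv_mul_mul_eq_of_mul_mul_inv_eq (hg s)]
  · rfl

theorem doubleClassIdempotent_restrictToCentralizer (hg : IsBasepointConjugator b g)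
    {x : G × G → k} (hx : ∀ z, x ⋆ z = z ⋆ x)
    (hsupp : Function.support x ⊆ {p | ConjClasses.mk p.1 = c}) :
    doubleClassIdempotent b g c (restrictToCentralizer (b c) x) = x := by
  funext ⟨s, u⟩
  rw [doubleClassIdempotent_restrictToCentralizer_apply hg hx]
  split_ifs with hs
  · rfl
  · exact (Function.support_subset_iff'.1 hsupp _ hs).symm

theorem doubleClassIdempotent_ne_zero (hb : ∀ c : ConjClasses G, ConjClasses.mk (b c) = c)
    (hg : IsBasepointConjugator b g) {f : MonoidAlgebra k (centralizer ({b c} : Set G))}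
    (hf : ∀ y, f * y = y * f) (hf0 : f ≠ 0) : doubleClassIdempotent b g c f ≠ 0 := fun h =>
  hf0 <| by
    rw [← restrictToCentralizer_doubleClassIdempotent hb hg hf, h, restrictToCentralizer_zero]

theorem doubleClassIdempotent_mul (hb : ∀ c : ConjClasses G, ConjClasses.mk (b c) = c)
    (hg : IsBasepointConjugator b g) {f f' : MonoidAlgebra k (centralizer ({b c} : Set G))}
    (hf : ∀ y, f * y = y * f) (hf' : ∀ y, f' * y = y * f') :
    doubleClassIdempotent b g c f ⋆ doubleClassIdempotent b g c f' =
      doubleClassIdempotent b g c (f * f') := by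
  have hE := doubleClassIdempotent_comm hg hf
  calc _ = doubleClassIdempotent b g c (restrictToCentralizer (b c)
          (doubleClassIdempotent b g c f ⋆ doubleClassIdempotent b g c f')) :=
        (doubleClassIdempotent_restrictToCentralizer hg
          (drinfeldDoubleMul_comm_of_comm hE (doubleClassIdempotent_comm hg hf'))
          (support_drinfeldDoubleMul_subset (support_doubleClassIdempotent_subset f') _)).symm
    _ = _ := by
        rw [restrictToCentralizer_mul hE, restrictToCentralizer_doubleClassIdempotent hb hg hf,
          restrictToCentralizer_doubleClassIdempotent hb hg hf']

end ClassIdempotent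

section Classification
variable {k G : Type*} [Field k] [Group G] [Fintype G] {b : ConjClasses G → G} {g : G → G}
  {c : ConjClasses G}

theorem isCentrallyPrimitiveFor_doubleClassIdempotent
    (hb : ∀ c : ConjClasses G, ConjClasses.mk (b c) = c) (hg : IsBasepointConjugator b g)
    {f : MonoidAlgebra k (centralizer ({b c} : Set G))} (hf : IsCentrallyPrimitiveFor (· * ·) f) :
    IsCentrallyPrimitiveFor drinfeldDoubleMul (doubleClassIdempotent b g c f) := by
  obtain ⟨hf0, hfc, hff, hprim⟩ := hf
  refine ⟨doubleClassIdempotent_ne_zero hb hg hfc hf0, doubleClassIdempotent_comm hg hfc,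
    (doubleClassIdempotent_mul hb hg hfc hfc).trans (congrArg _ hff), ?_⟩
  rintro ⟨e₁, e₂, h₁, h₂, hc₁, hc₂, hi₁, hi₂, h₁₂, hsum⟩
  -- `eᵢ = eᵢ ⋆ e_{c,f}`, so each summand lives on the class `c` and comes from `k[C_G(b c)]`.
  have hE : ∀ e : G × G → k, (∀ z, e ⋆ z = z ⋆ e) → e ⋆ doubleClassIdempotent b g c f = e →
      doubleClassIdempotent b g c (restrictToCentralizer (b c) e) = e := fun e he hef =>
    doubleClassIdempotent_restrictToCentralizer hg he
      (hef ▸ support_drinfeldDoubleMul_subset (support_doubleClassIdempotent_subset f) e)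
  have he₁ := hE e₁ hc₁ (by rw [hsum, drinfeldDoubleMul_add_right, hi₁, h₁₂, add_zero])
  have he₂ := hE e₂ hc₂ (by rw [hsum, drinfeldDoubleMul_add_right, ← hc₁ e₂, h₁₂, hi₂, zero_add])
  refine hprim ⟨restrictToCentralizer (b c) e₁, restrictToCentralizer (b c) e₂,
    fun h => h₁ (by rw [← he₁, h, doubleClassIdempotent_zero]),
    fun h => h₂ (by rw [← he₂, h, doubleClassIdempotent_zero]),
    restrictToCentralizer_comm hc₁, restrictToCentralizer_comm hc₂,
    (restrictToCentralizer_mul hc₁ e₁).symm.trans (congrArg _ hi₁),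
    (restrictToCentralizer_mul hc₂ e₂).symm.trans (congrArg _ hi₂),
    (restrictToCentralizer_mul hc₁ e₂).symm.trans (by rw [h₁₂, restrictToCentralizer_zero]), ?_⟩
  rw [← restrictToCentralizer_add, ← hsum, restrictToCentralizer_doubleClassIdempotent hb hg hfc]

theorem isCentrallyPrimitiveFor_of_doubleClassIdempotent
    (hb : ∀ c : ConjClasses G, ConjClasses.mk (b c) = c) (hg : IsBasepointConjugator b g)
    {f : MonoidAlgebra k (centralizer ({b c} : Set G))} (hfc : ∀ y, f * y = y * f)
    (he : IsCentrallyPrimitiveFor drinfeldDoubleMul (doubleClassIdempotent b g c f)) :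
    IsCentrallyPrimitiveFor (· * ·) f := by
  obtain ⟨he0, -, hee, hprim⟩ := he
  refine ⟨fun h => he0 (by rw [h, doubleClassIdempotent_zero]), hfc, ?_, ?_⟩
  · calc f * f = restrictToCentralizer (b c) (doubleClassIdempotent b g c (f * f)) :=
          (restrictToCentralizer_doubleClassIdempotent hb hg fun y => by
            rw [mul_assoc, hfc y, ← mul_assoc, hfc, mul_assoc]).symm
      _ = f := by
          rw [← doubleClassIdempotent_mul hb hg hfc hfc, hee,
            restrictToCentralizer_doubleClassIdempotent hb hg hfc]
  · rintro ⟨f₁, f₂, h₁, h₂, hc₁, hc₂, hi₁, hi₂, h₁₂, hsum⟩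
    exact hprim ⟨_, _, doubleClassIdempotent_ne_zero hb hg hc₁ h₁,
      doubleClassIdempotent_ne_zero hb hg hc₂ h₂,
      doubleClassIdempotent_comm hg hc₁, doubleClassIdempotent_comm hg hc₂,
      (doubleClassIdempotent_mul hb hg hc₁ hc₁).trans (congrArg _ hi₁),
      (doubleClassIdempotent_mul hb hg hc₂ hc₂).trans (congrArg _ hi₂),
      (doubleClassIdempotent_mul hb hg hc₁ hc₂).trans
        ((congrArg _ h₁₂).trans doubleClassIdempotent_zero),
      by rw [hsum, doubleClassIdempotent_add]⟩

theorem exists_doubleClassIdempotent_eq_of_isCentrallyPrimitiveFor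
    (hb : ∀ c : ConjClasses G, ConjClasses.mk (b c) = c) (hg : IsBasepointConjugator b g)
    {e : G × G → k} (he : IsCentrallyPrimitiveFor drinfeldDoubleMul e) :
    ∃ c, doubleClassIdempotent b g c (restrictToCentralizer (b c) e) = e := by
  obtain ⟨⟨s, u⟩, hsu⟩ := Function.ne_iff.1 he.1
  refine ⟨ConjClasses.mk s, ?_⟩
  set ε := doubleClassIdempotent b g (ConjClasses.mk s) (1 : MonoidAlgebra k _)
  have h1 : ∀ y : MonoidAlgebra k (centralizer ({b (ConjClasses.mk s)} : Set G)), 1 * y = y * 1 :=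
    fun y => (Commute.one_left y).eq
  have hε := doubleClassIdempotent_comm hg h1
  have hεε : ε ⋆ ε = ε := by rw [doubleClassIdempotent_mul hb hg h1 h1, one_mul]
  have hεe : ε ⋆ e =
      doubleClassIdempotent b g _ (restrictToCentralizer (b (ConjClasses.mk s)) e) := by
    rw [← doubleClassIdempotent_restrictToCentralizer hg (drinfeldDoubleMul_comm_of_comm hε he.2.1)
      (hε e ▸ support_drinfeldDoubleMul_subset (support_doubleClassIdempotent_subset 1) e),
      restrictToCentralizer_mul hε, restrictToCentralizer_doubleClassIdempotent hb hg h1, one_mul]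
  have hεe_ne : ε ⋆ e ≠ 0 := fun h => hsu <| by
    simpa [hεe, doubleClassIdempotent_restrictToCentralizer_apply hg he.2.1] using congrFun h (s, u)
  rw [← hεe]
  exact (he.drinfeldDoubleMul_eq_zero_or_eq hε hεε).resolve_left hεe_ne

end Classification

theorem drinfeldDouble_centrally_primitive_idempotents_general
    (k : Type*) [Field k] (G : Type*) [Group G] [Fintype G]
    (b : ConjClasses G → G) (hb : ∀ c : ConjClasses G, ConjClasses.mk (b c) = c)
    (g : G → G) (hg : ∀ s : G, g s * b (ConjClasses.mk s) * (g s)⁻¹ = s) :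
    -- (a) each `e_{c,f}` is a centrally primitive idempotent of `D(G)`
    (∀ (c : ConjClasses G) (f : MonoidAlgebra k ↥(Subgroup.centralizer ({b c} : Set G))),
      IsCentrallyPrimitiveFor (· * ·) f →
      IsCentrallyPrimitiveFor drinfeldDoubleMul (doubleClassIdempotent b g c f)) ∧
    -- (b) `e_{c,f}` does not depend on the choice of the section `g`
    (∀ (g' : G → G), (∀ s : G, g' s * b (ConjClasses.mk s) * (g' s)⁻¹ = s) →
      ∀ (c : ConjClasses G) (f : MonoidAlgebra k ↥(Subgroup.centralizer ({b c} : Set G))),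
        IsCentrallyPrimitiveFor (· * ·) f →
        doubleClassIdempotent b g c f = doubleClassIdempotent b g' c f) ∧
    -- (c) `(c, f) ↦ e_{c,f}` is injective on pairs
    Function.Injective
      (fun p : Σ c : ConjClasses G,
          {f : MonoidAlgebra k ↥(Subgroup.centralizer ({b c} : Set G)) //
            IsCentrallyPrimitiveFor (· * ·) f} =>
        doubleClassIdempotent b g p.1 p.2.1) ∧
    -- (d) every centrally primitive idempotent of `D(G)` arises as some `e_{c,f}`
    (∀ e : G × G → k, IsCentrallyPrimitiveFor drinfeldDoubleMul e →
      ∃ (c : ConjClasses G)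
        (f : MonoidAlgebra k ↥(Subgroup.centralizer ({b c} : Set G))),
        IsCentrallyPrimitiveFor (· * ·) f ∧ doubleClassIdempotent b g c f = e) := by
  refine ⟨fun c f hf => isCentrallyPrimitiveFor_doubleClassIdempotent hb hg hf,
    fun g' hg' c f hf => ?_, ?_, fun e he => ?_⟩
  · calc doubleClassIdempotent b g c f
        = doubleClassIdempotent b g c
            (restrictToCentralizer (b c) (doubleClassIdempotent b g' c f)) := by
          rw [restrictToCentralizer_doubleClassIdempotent hb hg' hf.2.1]
      _ = doubleClassIdempotent b g' c f :=
          doubleClassIdempotent_restrictToCentralizer hg (doubleClassIdempotent_comm hg' hf.2.1)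
            (support_doubleClassIdempotent_subset f)
  · rintro ⟨c, f, hf⟩ ⟨c', f', hf'⟩ (h : doubleClassIdempotent b g c f = _)
    obtain ⟨p, hp⟩ := Function.ne_iff.1 (doubleClassIdempotent_ne_zero hb hg hf.2.1 hf.1)
    obtain rfl : c = c' := (support_doubleClassIdempotent_subset f hp).symm.trans
      (support_doubleClassIdempotent_subset f' (h ▸ hp))
    obtain rfl : f = f' := by
      rw [← restrictToCentralizer_doubleClassIdempotent hb hg hf.2.1, h,
        restrictToCentralizer_doubleClassIdempotent hb hg hf'.2.1]
    rfl
  · obtain ⟨c, hc⟩ := exists_doubleClassIdempotent_eq_of_isCentrallyPrimitiveFor hb hg he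
    exact ⟨c, _, isCentrallyPrimitiveFor_of_doubleClassIdempotent hb hg
      (restrictToCentralizer_comm he.2.1) (by rwa [hc]), hc⟩

/-- **Classification of the centrally primitive idempotents of `D(G)`.**
Let `G` be a finite group and `k` a field of characteristic zero.  Fix for each
conjugacy class `c` a basepoint `b c ∈ c`, and for each `s ∈ G` an element `g s` with
`g s · b (mk s) · (g s)⁻¹ = s`.  Then for every conjugacy class `c` and every centrally
primitive idempotent `f` of the group algebra `k[C_G(b c)]`, the element `e_{c,f}` is a
centrally primitive idempotent of `D(G)`; it does not depend on the choice of the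
section `g`; and `(c, f) ↦ e_{c,f}` is a bijection from the set of such pairs onto the
set of centrally primitive idempotents of `D(G)`. -/
theorem drinfeldDouble_centrally_primitive_idempotents
    (k : Type*) [Field k] [CharZero k] (G : Type*) [Group G] [Fintype G]
    (b : ConjClasses G → G) (hb : ∀ c : ConjClasses G, ConjClasses.mk (b c) = c)
    (g : G → G) (hg : ∀ s : G, g s * b (ConjClasses.mk s) * (g s)⁻¹ = s) :
    -- (a) each `e_{c,f}` is a centrally primitive idempotent of `D(G)`
    (∀ (c : ConjClasses G) (f : MonoidAlgebra k ↥(Subgroup.centralizer ({b c} : Set G))),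
      IsCentrallyPrimitiveFor (· * ·) f →
      IsCentrallyPrimitiveFor drinfeldDoubleMul (doubleClassIdempotent b g c f)) ∧
    -- (b) `e_{c,f}` does not depend on the choice of the section `g`
    (∀ (g' : G → G), (∀ s : G, g' s * b (ConjClasses.mk s) * (g' s)⁻¹ = s) →
      ∀ (c : ConjClasses G) (f : MonoidAlgebra k ↥(Subgroup.centralizer ({b c} : Set G))),
        IsCentrallyPrimitiveFor (· * ·) f →
        doubleClassIdempotent b g c f = doubleClassIdempotent b g' c f) ∧
    -- (c) `(c, f) ↦ e_{c,f}` is injective on pairs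
    Function.Injective
      (fun p : Σ c : ConjClasses G,
          {f : MonoidAlgebra k ↥(Subgroup.centralizer ({b c} : Set G)) //
            IsCentrallyPrimitiveFor (· * ·) f} =>
        doubleClassIdempotent b g p.1 p.2.1) ∧
    -- (d) every centrally primitive idempotent of `D(G)` arises as some `e_{c,f}`
    (∀ e : G × G → k, IsCentrallyPrimitiveFor drinfeldDoubleMul e →
      ∃ (c : ConjClasses G)
        (f : MonoidAlgebra k ↥(Subgroup.centralizer ({b c} : Set G))),
        IsCentrallyPrimitiveFor (· * ·) f ∧ doubleClassIdempotent b g c f = e) :=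
  drinfeldDouble_centrally_primitive_idempotents_general k G b hb g hg
end

section
/- Let G be a finite group, k an algebraically closed field of characteristic zero, C ⊆ G the conjugacy class of s₀ ∈ G with section g : C → G and cocycle ζ_a(u) = g_{uau⁻¹}⁻¹ u g_a ∈ C_G(s₀), and let (V, π) be a simple finite-dimensional representation of C_G(s₀) over k. Then the D(G)-module W = k^C ⊗ V, with action ρ(δ_s ⊗ u)(e_b ⊗ v) = [s = u b u⁻¹] · (e_{ubu⁻¹} ⊗ π(ζ_b(u)) v), is a simple D(G)-module. -/
attribute [local instance] Classical.propDecidable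

/-- The conjugacy class `C` of `s₀` in a group `G`. -/
def conjClass {G : Type*} [Group G] (s₀ : G) : Set G := {x : G | ∃ t : G, t * s₀ * t⁻¹ = x}

lemma conjClass_conj_mem {G : Type*} [Group G] {s₀ a : G} (ha : a ∈ conjClass s₀) (u : G) :
    u⁻¹ * a * u ∈ conjClass s₀ := by
  obtain ⟨t, ht⟩ := ha
  exact ⟨u⁻¹ * t, by rw [mul_inv_rev]; rw [← ht]; group⟩

/-- The cocycle `ζ_a(u) = g_{uau⁻¹}⁻¹ · u · g_a` of a section `g` of a conjugacy class. -/
def zeta {G : Type*} [Group G] (g : G → G) (a u : G) : G := (g (u * a * u⁻¹))⁻¹ * u * g a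

lemma zeta_mem_centralizer {G : Type*} [Group G] {s₀ : G} {g : G → G}
    (hg : ∀ a ∈ conjClass s₀, g a * s₀ * (g a)⁻¹ = a)
    {a : G} (ha : a ∈ conjClass s₀) (u : G) :
    zeta g a u ∈ Subgroup.centralizer ({s₀} : Set G) := by
  have hb : u * a * u⁻¹ ∈ conjClass s₀ := by
    obtain ⟨t, ht⟩ := ha
    exact ⟨u * t, by rw [mul_inv_rev]; rw [← ht]; group⟩
  have h1 : g a * s₀ = a * g a := by
    calc g a * s₀ = (g a * s₀ * (g a)⁻¹) * g a := by group
    _ = a * g a := by rw [hg a ha]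
  have h2 : s₀ * (g (u * a * u⁻¹))⁻¹ = (g (u * a * u⁻¹))⁻¹ * (u * a * u⁻¹) := by
    have h2' := hg _ hb
    calc s₀ * (g (u * a * u⁻¹))⁻¹
        = (g (u * a * u⁻¹))⁻¹ * (g (u * a * u⁻¹) * s₀ * (g (u * a * u⁻¹))⁻¹) := by group
      _ = (g (u * a * u⁻¹))⁻¹ * (u * a * u⁻¹) := by rw [h2']
  refine Subgroup.mem_centralizer_iff.mpr ?_
  intro x hx
  rcases hx with rfl
  show x * zeta g a u = zeta g a u * x
  unfold zeta
  calc x * ((g (u * a * u⁻¹))⁻¹ * u * g a)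
      = (x * (g (u * a * u⁻¹))⁻¹) * (u * g a) := by group
    _ = ((g (u * a * u⁻¹))⁻¹ * (u * a * u⁻¹)) * (u * g a) := by rw [h2]
    _ = (g (u * a * u⁻¹))⁻¹ * u * (a * g a) := by group
    _ = (g (u * a * u⁻¹))⁻¹ * u * (g a * x) := by rw [← h1]
    _ = ((g (u * a * u⁻¹))⁻¹ * u * g a) * x := by group

/-- The action `ρ(δ_s ⊗ u)` on `W = k^C ⊗ V` (realised as functions `C → V`):
`ρ(δ_s ⊗ u)(e_b ⊗ v) = [s = ubu⁻¹] · (e_{ubu⁻¹} ⊗ π(ζ_b(u)) v)`. -/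
noncomputable def doubleRep {k : Type*} [CommSemiring k] {V : Type*} [AddCommMonoid V]
    [Module k V] {G : Type*} [Group G] (s₀ : G) (g : G → G)
    (hg : ∀ a ∈ conjClass s₀, g a * s₀ * (g a)⁻¹ = a)
    (π : Representation k ↥(Subgroup.centralizer ({s₀} : Set G)) V) (s u : G) :
    (↥(conjClass s₀) → V) →ₗ[k] (↥(conjClass s₀) → V) where
  toFun w := fun a =>
    if (a : G) = s then
      π ⟨zeta g (u⁻¹ * ↑a * u) u, zeta_mem_centralizer hg (conjClass_conj_mem a.2 u) u⟩
        (w ⟨u⁻¹ * ↑a * u, conjClass_conj_mem a.2 u⟩)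
    else 0
  map_add' w w' := by funext a; by_cases h : (a : G) = s <;> simp [h]
  map_smul' c w := by funext a; by_cases h : (a : G) = s <;> simp [h]


section Aux

attribute [local instance] Classical.propDecidable

variable {k : Type*} [Field k] {V : Type*} [AddCommGroup V] [Module k V]
  {G : Type*} [Group G] {s₀ : G}

/-- The function supported at `b` with value `v`, as a linear map. -/
noncomputable def sngL (b : ↥(conjClass s₀)) : V →ₗ[k] (↥(conjClass s₀) → V) where
  toFun v := fun c => if c = b then v else 0
  map_add' v w := by funext c; by_cases h : c = b <;> simp [h]
  map_smul' r v := by funext c; by_cases h : c = b <;> simp [h]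

lemma sngL_apply (b : ↥(conjClass s₀)) (v : V) (c : ↥(conjClass s₀)) :
    sngL (k := k) b v c = if c = b then v else 0 := rfl

variable {g : G → G} (hg : ∀ a ∈ conjClass s₀, g a * s₀ * (g a)⁻¹ = a)
  (π : Representation k ↥(Subgroup.centralizer ({s₀} : Set G)) V)
include hg

lemma doubleRep_one (w : ↥(conjClass s₀) → V) (a : ↥(conjClass s₀)) :
    doubleRep s₀ g hg π (↑a) 1 w = sngL (k := k) a (w a) := by
  funext c
  simp only [doubleRep, LinearMap.coe_mk, AddHom.coe_mk, sngL_apply]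
  by_cases h : (c : G) = (a : G)
  · have hc : c = a := Subtype.ext h
    subst hc
    rw [if_pos h, if_pos rfl]
    have key : ∀ (x : G) (hzx : zeta g x 1 ∈ Subgroup.centralizer ({s₀} : Set G))
        (hx : x ∈ conjClass s₀) (hxy : x = (c : G)),
        π ⟨zeta g x 1, hzx⟩ (w ⟨x, hx⟩) = w c := by
      intro x hzx hx hxy
      subst hxy
      have hz : zeta g (c : G) 1 = 1 := by unfold zeta; group
      rw [show (⟨zeta g (c : G) 1, hzx⟩ : ↥(Subgroup.centralizer ({s₀} : Set G))) = 1
        from Subtype.ext hz, map_one, show (⟨(c : G), hx⟩ : ↥(conjClass s₀)) = c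
        from Subtype.coe_eta _ _]
      rfl
    exact key _ _ _ (by group)
  · have hc : ¬ c = a := fun hh => h (congrArg _ hh)
    rw [if_neg h, if_neg hc]

lemma doubleRep_sng (a b : ↥(conjClass s₀)) (u : G) (hu : u * (a:G) * u⁻¹ = (b:G)) (v : V) :
    doubleRep s₀ g hg π (↑b) u (sngL (k := k) a v) =
      sngL (k := k) b (π ⟨zeta g (a:G) u, zeta_mem_centralizer hg a.2 u⟩ v) := by
  have ha : u⁻¹ * (b:G) * u = (a:G) := by rw [← hu]; group
  funext c
  simp only [doubleRep, LinearMap.coe_mk, AddHom.coe_mk, sngL_apply]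
  by_cases h : (c : G) = (b : G)
  · have hc : c = b := Subtype.ext h
    subst hc
    rw [if_pos h, if_pos rfl]
    have key : ∀ (x : G) (hzx : zeta g x u ∈ Subgroup.centralizer ({s₀} : Set G))
        (hx : x ∈ conjClass s₀) (hxy : x = (a : G)),
        π ⟨zeta g x u, hzx⟩ (sngL (k := k) a v ⟨x, hx⟩) =
          π ⟨zeta g (a:G) u, zeta_mem_centralizer hg a.2 u⟩ v := by
      intro x hzx hx hxy
      subst hxy
      rw [sngL_apply, if_pos (Subtype.coe_eta _ _)]
    have hxy : u⁻¹ * (c : G) * u = (a : G) := by rw [h]; exact ha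
    exact key _ _ _ hxy
  · have hc : ¬ c = b := fun hh => h (congrArg _ hh)
    rw [if_neg h, if_neg hc]

omit hg in
/-- For any `a b ∈ C` and centralizer element `h` there is `u` conjugating `a` to `b`
with cocycle value `h`. -/
lemma exists_conj_zeta (hg : ∀ a ∈ conjClass s₀, g a * s₀ * (g a)⁻¹ = a) (a b : ↥(conjClass s₀))
    (h : ↥(Subgroup.centralizer ({s₀} : Set G))) :
    ∃ u : G, u * (a:G) * u⁻¹ = (b:G) ∧ zeta g (a:G) u = (h:G) := by
  set ga := g (a:G) with hga_def
  set gb := g (b:G) with hgb_def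
  have hga : ga * s₀ * ga⁻¹ = (a:G) := hg _ a.2
  have hgb : gb * s₀ * gb⁻¹ = (b:G) := hg _ b.2
  have hcomm : s₀ * (h:G) = (h:G) * s₀ :=
    Subgroup.mem_centralizer_iff.mp h.2 s₀ rfl
  refine ⟨gb * (h:G) * ga⁻¹, ?_, ?_⟩
  · calc gb * (h:G) * ga⁻¹ * (a:G) * (gb * (h:G) * ga⁻¹)⁻¹
        = gb * (h:G) * ga⁻¹ * (ga * s₀ * ga⁻¹) * (gb * (h:G) * ga⁻¹)⁻¹ := by rw [hga]
      _ = gb * ((h:G) * s₀) * (h:G)⁻¹ * gb⁻¹ := by group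
      _ = gb * (s₀ * (h:G)) * (h:G)⁻¹ * gb⁻¹ := by rw [hcomm]
      _ = gb * s₀ * gb⁻¹ := by group
      _ = (b:G) := hgb
  · have hu : gb * (h:G) * ga⁻¹ * (a:G) * (gb * (h:G) * ga⁻¹)⁻¹ = (b:G) := by
      calc gb * (h:G) * ga⁻¹ * (a:G) * (gb * (h:G) * ga⁻¹)⁻¹
          = gb * (h:G) * ga⁻¹ * (ga * s₀ * ga⁻¹) * (gb * (h:G) * ga⁻¹)⁻¹ := by rw [hga]
        _ = gb * ((h:G) * s₀) * (h:G)⁻¹ * gb⁻¹ := by group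
        _ = gb * (s₀ * (h:G)) * (h:G)⁻¹ * gb⁻¹ := by rw [hcomm]
        _ = gb * s₀ * gb⁻¹ := by group
        _ = (b:G) := hgb
    show (g (gb * (h:G) * ga⁻¹ * (a:G) * (gb * (h:G) * ga⁻¹)⁻¹))⁻¹ *
        (gb * (h:G) * ga⁻¹) * g (a:G) = (h:G)
    rw [hu, ← hgb_def, ← hga_def]
    group

end Aux

/-- **Simplicity of the induced `D(G)`-module.**
Let `k` be an algebraically closed field of characteristic zero, `G` a finite group,
`C` the conjugacy class of `s₀` with section `g` and cocycle `ζ`, and `(V, π)` a simple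
finite-dimensional representation of the centralizer `C_G(s₀)`.  Then the `D(G)`-module
`W = k^C ⊗ V` with action `ρ(δ_s ⊗ u)(e_b ⊗ v) = [s = ubu⁻¹]·(e_{ubu⁻¹} ⊗ π(ζ_b(u)) v)`
is a simple `D(G)`-module: it is nonzero and has no `k`-subspace other than `⊥` and `⊤`
stable under all the operators `ρ(δ_s ⊗ u)`. -/
theorem drinfeldDouble_representation_simple (k : Type*) [Field k] [IsAlgClosed k]
    [CharZero k] (G : Type*) [Group G] [Fintype G]
    (V : Type*) [AddCommGroup V] [Module k V] [FiniteDimensional k V]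
    (s₀ : G) (g : G → G) (hg : ∀ a ∈ conjClass s₀, g a * s₀ * (g a)⁻¹ = a)
    (π : Representation k ↥(Subgroup.centralizer ({s₀} : Set G)) V)
    (hVnontriv : Nontrivial V)
    (hVsimple : ∀ U : Submodule k V,
      (∀ h : ↥(Subgroup.centralizer ({s₀} : Set G)), ∀ v ∈ U, π h v ∈ U) →
      U = ⊥ ∨ U = ⊤) :
    Nontrivial (↥(conjClass s₀) → V) ∧
    (∀ U : Submodule k (↥(conjClass s₀) → V),
      (∀ s u : G, ∀ w ∈ U, doubleRep s₀ g hg π s u w ∈ U) →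
      U = ⊥ ∨ U = ⊤) := by
  constructor
  · obtain ⟨x, y, hxy⟩ := hVnontriv
    exact ⟨fun _ => x, fun _ => y, fun hf => hxy (congrFun hf ⟨s₀, 1, by group⟩)⟩
  · intro U hU
    by_cases hbot : U = ⊥
    · exact Or.inl hbot
    right
    obtain ⟨w, hwU, hwne⟩ := Submodule.exists_mem_ne_zero_of_ne_bot hbot
    obtain ⟨a, hva⟩ : ∃ a, w a ≠ 0 := by
      by_contra hcon
      push_neg at hcon
      exact hwne (funext hcon)
    -- Step 1: the function supported at `a` with value `w a` is in `U`.
    have h1 : sngL (k := k) a (w a) ∈ U := by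
      rw [← doubleRep_one hg π w a]
      exact hU (↑a) 1 w hwU
    -- Step 2: translate to any point and twist by any centralizer element.
    have h2 : ∀ (b : ↥(conjClass s₀)) (v : V), sngL (k := k) b v ∈ U → ∀
        (c : ↥(conjClass s₀)) (h : ↥(Subgroup.centralizer ({s₀} : Set G))),
        sngL (k := k) c (π h v) ∈ U := by
      intro b v hv c h
      obtain ⟨u, hu, hz⟩ := exists_conj_zeta hg b c h
      have := hU (↑c) u _ hv
      rw [doubleRep_sng hg π b c u hu v] at this
      have he : (⟨zeta g (b:G) u, zeta_mem_centralizer hg b.2 u⟩ :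
          ↥(Subgroup.centralizer ({s₀} : Set G))) = h := Subtype.ext hz
      rwa [he] at this
    -- Step 3: for every point `b`, every value is attained.
    have h3 : ∀ (b : ↥(conjClass s₀)) (v : V), sngL (k := k) b v ∈ U := by
      intro b
      have hinv : ∀ h : ↥(Subgroup.centralizer ({s₀} : Set G)),
          ∀ v ∈ Submodule.comap (sngL (k := k) b) U,
          π h v ∈ Submodule.comap (sngL (k := k) b) U := by
        intro h v hv
        exact h2 b v hv b h
      have key : Submodule.comap (sngL (k := k) b) U = ⊤ := by
        rcases hVsimple (Submodule.comap (sngL (k := k) b) U) hinv with hB | hT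
        · exfalso
          have : π 1 (w a) ∈ Submodule.comap (sngL (k := k) b) U := h2 a (w a) h1 b 1
          rw [hB] at this
          rw [map_one] at this
          exact hva (by simpa using this)
        · exact hT
      intro v
      have : v ∈ Submodule.comap (sngL (k := k) b) U := key ▸ Submodule.mem_top
      exact this
    -- Step 4: every function is a sum of such.
    rw [eq_top_iff]
    intro w' _
    haveI : Fintype ↥(conjClass s₀) := Fintype.ofFinite _
    have hsum : w' = ∑ b : ↥(conjClass s₀), sngL (k := k) b (w' b) := by
      funext c
      rw [Finset.sum_apply]
      simp only [sngL_apply]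
      rw [Finset.sum_ite_eq Finset.univ c (fun b => w' b)]
      simp
    rw [hsum]
    exact Submodule.sum_mem U fun b _ => h3 b (w' b)
end

section
/- Let k be a field, q ∈ k a nonzero element, and let S_q² be the quotient of the free associative k-algebra on generators b₊, b₋, b₃ by the two-sided ideal generated by the relations b₊b₃ − q²b₃b₊ − (1−q²)b₊, b₋b₃ − q⁻²b₃b₋ − (1−q⁻²)b₋, q²b₋b₊ − q⁻²b₊b₋ − (q−q⁻¹)(b₃−1), and b₃² − b₃ − q b₋b₊. Then the 2×2 matrix p = [[q²(1−b₃), −q b₊], [b₋, b₃]] over S_q² satisfies p² = p; equivalently, the Hajac–Majid element e = 1 − p is an idempotent in M₂(S_q²). -/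
/-- The defining relations of the standard quantum sphere `S_q²`: with generators
`b₊ = ι 0`, `b₋ = ι 1`, `b₃ = ι 2` of the free algebra, the relations are
`b₊b₃ = q²b₃b₊ + (1−q²)b₊`, `b₋b₃ = q⁻²b₃b₋ + (1−q⁻²)b₋`,
`q²b₋b₊ = q⁻²b₊b₋ + (q−q⁻¹)(b₃−1)`, and `b₃² = b₃ + q b₋b₊`. -/
inductive QuantumSphereRel (k : Type*) [Field k] (q : k) :
    FreeAlgebra k (Fin 3) → FreeAlgebra k (Fin 3) → Prop
  | plus_three :
      QuantumSphereRel k q (FreeAlgebra.ι k 0 * FreeAlgebra.ι k 2)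
        (q ^ 2 • (FreeAlgebra.ι k 2 * FreeAlgebra.ι k 0) + (1 - q ^ 2) • FreeAlgebra.ι k 0)
  | minus_three :
      QuantumSphereRel k q (FreeAlgebra.ι k 1 * FreeAlgebra.ι k 2)
        (q⁻¹ ^ 2 • (FreeAlgebra.ι k 2 * FreeAlgebra.ι k 1) +
          (1 - q⁻¹ ^ 2) • FreeAlgebra.ι k 1)
  | minus_plus :
      QuantumSphereRel k q (q ^ 2 • (FreeAlgebra.ι k 1 * FreeAlgebra.ι k 0))
        (q⁻¹ ^ 2 • (FreeAlgebra.ι k 0 * FreeAlgebra.ι k 1) +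
          (q - q⁻¹) • (FreeAlgebra.ι k 2 - 1))
  | three_three :
      QuantumSphereRel k q (FreeAlgebra.ι k 2 * FreeAlgebra.ι k 2)
        (FreeAlgebra.ι k 2 + q • (FreeAlgebra.ι k 1 * FreeAlgebra.ι k 0))

/-- The coordinate algebra `S_q²` of the standard quantum sphere: the quotient of the
free algebra `k⟨b₊, b₋, b₃⟩` by the two-sided ideal generated by the stated relations. -/
abbrev QuantumSphere (k : Type*) [Field k] (q : k) : Type _ := RingQuot (QuantumSphereRel k q)

section HajacMajid

variable {k R : Type*} [CommRing k] [Ring R] [Algebra k R] {q : k} {bp bm b3 : R}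

/- Each entry of `p * p - p` is a linear combination of the relations of `S_q²`, here
multiplied through by powers of `q` so that no inverse of `q` occurs. -/
theorem isIdempotentElem_hajacMajid_matrix
    (plus_three : bp * b3 = q ^ 2 • (b3 * bp) + (1 - q ^ 2) • bp)
    (minus_three : q ^ 2 • (bm * b3) = b3 * bm + (q ^ 2 - 1) • bm)
    (minus_plus : q ^ 4 • (bm * bp) = bp * bm + (q ^ 3 - q) • (b3 - 1))
    (three_three : b3 * b3 = b3 + q • (bm * bp)) :
    IsIdempotentElem !![q ^ 2 • (1 - b3), -(q • bp); bm, b3] := by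
  rw [IsIdempotentElem, Matrix.mul_fin_two, EmbeddingLike.apply_eq_iff_eq]
  simp only [Matrix.vecCons_inj, and_true]
  simp only [mul_smul_comm, smul_mul_assoc, mul_sub, sub_mul, mul_one, one_mul, mul_neg,
    neg_mul, smul_smul, smul_sub]
  refine ⟨⟨?_, ?_⟩, ?_, ?_⟩
  · linear_combination (norm := module) q ^ 4 • three_three + q • minus_plus
  · linear_combination (norm := module) (-q) • plus_three
  · linear_combination (norm := module) -minus_three
  · linear_combination (norm := module) three_three

end HajacMajid

namespace QuantumSphere

variable {k : Type*} [Field k] {q : k}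

variable (q) in
def gen (i : Fin 3) : QuantumSphere k q :=
  RingQuot.mkAlgHom k (QuantumSphereRel k q) (FreeAlgebra.ι k i)

theorem gen_plus_three :
    gen q 0 * gen q 2 = q ^ 2 • (gen q 2 * gen q 0) + (1 - q ^ 2) • gen q 0 := by
  simpa [gen] using RingQuot.mkAlgHom_rel k (QuantumSphereRel.plus_three (k := k) (q := q))

theorem gen_minus_three (hq : q ≠ 0) :
    q ^ 2 • (gen q 1 * gen q 2) = gen q 2 * gen q 1 + (q ^ 2 - 1) • gen q 1 := by
  have h := congrArg (q ^ 2 • ·)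
    (RingQuot.mkAlgHom_rel k (QuantumSphereRel.minus_three (k := k) (q := q)))
  have hq2 : q ^ 2 * q⁻¹ ^ 2 = 1 := by field_simp
  simp only [map_mul, map_add, map_smul, smul_add, smul_smul, mul_sub, mul_one, hq2,
    one_smul] at h
  exact h

theorem gen_minus_plus (hq : q ≠ 0) :
    q ^ 4 • (gen q 1 * gen q 0) = gen q 0 * gen q 1 + (q ^ 3 - q) • (gen q 2 - 1) := by
  have h := congrArg (q ^ 2 • ·)
    (RingQuot.mkAlgHom_rel k (QuantumSphereRel.minus_plus (k := k) (q := q)))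
  have hq2 : q ^ 2 * q⁻¹ ^ 2 = 1 := by field_simp
  have hq1 : q ^ 2 * q⁻¹ = q := by field_simp
  simp only [map_mul, map_add, map_sub, map_one, map_smul, smul_add, smul_smul, mul_sub, hq1,
    hq2, one_smul] at h
  unfold gen
  linear_combination (norm := module) h

theorem gen_three_three : gen q 2 * gen q 2 = gen q 2 + q • (gen q 1 * gen q 0) := by
  simpa [gen] using RingQuot.mkAlgHom_rel k (QuantumSphereRel.three_three (k := k) (q := q))

end QuantumSphere

/-- **The Hajac–Majid projector on the standard quantum sphere.**
Let `k` be a field and `q ∈ k` nonzero, and let `b₊, b₋, b₃` denote the images of the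
generators in `S_q²`.  Then the `2×2` matrix `p = [[q²(1−b₃), −q b₊], [b₋, b₃]]` over
`S_q²` satisfies `p² = p`; equivalently, the Hajac–Majid element `e = 1 − p` is an
idempotent in `M₂(S_q²)`. -/
theorem quantumSphere_projector (k : Type*) [Field k] (q : k) (hq : q ≠ 0)
    (bp bm b3 : QuantumSphere k q)
    (hbp : bp = RingQuot.mkAlgHom k (QuantumSphereRel k q) (FreeAlgebra.ι k 0))
    (hbm : bm = RingQuot.mkAlgHom k (QuantumSphereRel k q) (FreeAlgebra.ι k 1))
    (hb3 : b3 = RingQuot.mkAlgHom k (QuantumSphereRel k q) (FreeAlgebra.ι k 2))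
    (p : Matrix (Fin 2) (Fin 2) (QuantumSphere k q))
    (hp : p = !![algebraMap k (QuantumSphere k q) (q ^ 2) * (1 - b3),
                 -(algebraMap k (QuantumSphere k q) q * bp);
                 bm, b3]) :
    p * p = p ∧ (1 - p) * (1 - p) = 1 - p := by
  subst hbp hbm hb3 hp
  have hidem := isIdempotentElem_hajacMajid_matrix QuantumSphere.gen_plus_three
    (QuantumSphere.gen_minus_three hq) (QuantumSphere.gen_minus_plus hq)
    QuantumSphere.gen_three_three
  simp only [Algebra.smul_def] at hidem
  exact ⟨hidem, hidem.one_sub⟩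
end
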